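/- arXiv:2505.19659 — 3 statements merged into one kernel-verified Lean document; each statement's English description precedes it below -/
import Mathlib

section
/- Let h : ℝ → ℝ and f : ℝ^d → ℝ be twice continuously differentiable, p a smooth positive density on ℝ^d, and fix x ∈ ℝ^d, y ∈ ℝ, ε ∈ ℝ^d. Define x̃(β) = x − (β²/2)∇log p(x) + βε and ψ(β) = h(f(x̃(β))) − y·f(x̃(β)). Then the second derivative of ψ at β = 0 satisfies ψ''(0) = h''(f(x))·εᵀ(∇f(x)∇f(x)ᵀ)ε + (h'(f(x)) − y)·εᵀ(∇²f(x))ε − (h'(f(x)) − y)·∇f(x)ᵀ∇log p(x). -/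
open MeasureTheory Real
open scoped RealInnerProductSpace BigOperators

/-- One-step Langevin perturbation: `x̃(β) = x − (β²/2)∇log p(x) + βε`. -/
noncomputable def langevinPerturb {d : ℕ} (p : EuclideanSpace ℝ (Fin d) → ℝ)
    (β : ℝ) (x ε : EuclideanSpace ℝ (Fin d)) : EuclideanSpace ℝ (Fin d) :=
  x - (β ^ 2 / 2) • gradient (fun z => Real.log (p z)) x + β • ε

/-- with `ψ(β) = h(f(x̃(β))) − y·f(x̃(β))`, the second derivative at
`β = 0` satisfies
`ψ''(0) = h''(f(x))·εᵀ(∇f(x)∇f(x)ᵀ)ε + (h'(f(x)) − y)·εᵀ(∇²f(x))ε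
          − (h'(f(x)) − y)·∇f(x)ᵀ∇log p(x)`.
Here `εᵀ(∇f(x)∇f(x)ᵀ)ε = ⟪∇f(x), ε⟫²` and the Hessian `∇²f(x)` is the derivative
of the gradient. -/
theorem psi_second_deriv_at_zero
    {d : ℕ} (h : ℝ → ℝ) (f p : EuclideanSpace ℝ (Fin d) → ℝ)
    (hh : ContDiff ℝ 2 h) (hf : ContDiff ℝ 2 f)
    (hp : ContDiff ℝ (⊤ : ℕ∞) p) (hppos : ∀ z, 0 < p z)
    (x ε : EuclideanSpace ℝ (Fin d)) (y : ℝ) :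
    deriv (deriv (fun b : ℝ =>
        h (f (langevinPerturb p b x ε)) - y * f (langevinPerturb p b x ε))) 0
      = deriv (deriv h) (f x) * ⟪gradient f x, ε⟫ ^ 2
        + (deriv h (f x) - y) * ⟪ε, (fderiv ℝ (gradient f) x) ε⟫
        - (deriv h (f x) - y) *
            ⟪gradient f x, gradient (fun z => Real.log (p z)) x⟫ := by
  set v : EuclideanSpace ℝ (Fin d) := gradient (fun z => Real.log (p z)) x with hv
  set γ : ℝ → EuclideanSpace ℝ (Fin d) := fun b => langevinPerturb p b x ε with hγ
  have hγ0 : γ 0 = x := by simp [hγ, langevinPerturb]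
  -- derivative of the path
  have hγ' : ∀ b : ℝ, HasDerivAt γ (ε - b • v) b := by
    intro b
    have h1 : HasDerivAt (fun t : ℝ => x - (t ^ 2 / 2) • v + t • ε)
        ((0 : EuclideanSpace ℝ (Fin d)) - ((2 * b ^ 1) / 2) • v + (1 : ℝ) • ε) b := by
      exact ((hasDerivAt_const b x).sub
        (((hasDerivAt_pow 2 b).div_const 2).smul_const v)).add
        ((hasDerivAt_id b).smul_const ε)
    convert h1 using 1
    · rfl
    simp only [pow_one, one_smul, zero_sub]
    module
  have hf1 : Differentiable ℝ f := hf.differentiable two_ne_zero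
  -- differentiability of the gradient of f
  have hgradf : Differentiable ℝ (gradient f) := by
    have hfd : Differentiable ℝ (fderiv ℝ f) :=
      (hf.fderiv_right (le_refl 2)).differentiable one_ne_zero
    exact ((InnerProductSpace.toDual ℝ (EuclideanSpace ℝ (Fin d))).symm.toContinuousLinearEquiv
      : (EuclideanSpace ℝ (Fin d) →L[ℝ] ℝ) ≃L[ℝ] EuclideanSpace ℝ (Fin d)).toContinuousLinearMap.differentiable.comp hfd
  -- derivative of f along the path
  have K1 : ∀ b : ℝ, HasDerivAt (fun t => f (γ t)) ⟪gradient f (γ b), ε - b • v⟫ b := by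
    intro b
    have hg : HasGradientAt f (gradient f (γ b)) (γ b) := (hf1 (γ b)).hasGradientAt
    have hF : HasFDerivAt f (InnerProductSpace.toDual ℝ (EuclideanSpace ℝ (Fin d)) (gradient f (γ b))) (γ b) :=
      hasGradientAt_iff_hasFDerivAt.mp hg
    have := hF.comp_hasDerivAt b (hγ' b)
    exact this.congr_deriv (by simp [InnerProductSpace.toDual_apply_apply])
  have hh1 : Differentiable ℝ h := hh.differentiable two_ne_zero
  -- first derivative of ψ
  have Kψ : ∀ b : ℝ, HasDerivAt (fun t => h (f (γ t)) - y * f (γ t))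
      ((deriv h (f (γ b)) - y) * ⟪gradient f (γ b), ε - b • v⟫) b := by
    intro b
    have h1 := ((hh1 (f (γ b))).hasDerivAt.comp b (K1 b)).sub ((K1 b).const_mul y)
    exact h1.congr_deriv (by ring)
  have hderivψ : deriv (fun b : ℝ =>
      h (f (langevinPerturb p b x ε)) - y * f (langevinPerturb p b x ε))
      = fun b => (deriv h (f (γ b)) - y) * ⟪gradient f (γ b), ε - b • v⟫ := by
    funext b
    exact (Kψ b).deriv
  rw [hderivψ]
  -- derivative of deriv h along the path at 0
  have hdh : ContDiff ℝ 1 (deriv h) := by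
    have : ContDiff ℝ (1 + 1 : ℕ) h := by exact_mod_cast hh
    exact (contDiff_succ_iff_deriv.mp this).2.2
  have T1 : HasDerivAt (fun t => deriv h (f (γ t)) - y)
      (deriv (deriv h) (f x) * ⟪gradient f x, ε - (0:ℝ) • v⟫) 0 := by
    have := ((hdh.differentiable one_ne_zero (f (γ 0))).hasDerivAt.comp 0 (K1 0)).sub_const y
    rwa [hγ0] at this
  -- derivative of the inner product factor at 0
  have Tc : HasDerivAt (fun t => gradient f (γ t)) ((fderiv ℝ (gradient f) x) ε) 0 := by
    have hF : HasFDerivAt (gradient f) (fderiv ℝ (gradient f) (γ 0)) (γ 0) :=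
      (hgradf (γ 0)).hasFDerivAt
    have := hF.comp_hasDerivAt 0 (hγ' 0)
    rw [hγ0] at this
    exact this.congr_deriv (by simp)
  have Td : HasDerivAt (fun t : ℝ => ε - t • v) (-v) 0 := by
    have := (hasDerivAt_const (0:ℝ) ε).sub ((hasDerivAt_id (0:ℝ)).smul_const v)
    exact this.congr_deriv (by simp)
  have T2 : HasDerivAt (fun t => ⟪gradient f (γ t), ε - t • v⟫)
      (⟪gradient f x, -v⟫ + ⟪(fderiv ℝ (gradient f) x) ε, ε - (0:ℝ) • v⟫) 0 := by
    have := HasDerivAt.inner ℝ Tc Td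
    rwa [hγ0] at this
  have Tfin := T1.mul T2
  rw [hγ0] at Tfin
  rw [show (fun b => (deriv h (f (γ b)) - y) * ⟪gradient f (γ b), ε - b • v⟫) = ((fun t => deriv h (f (γ t)) - y) * fun t => ⟪gradient f (γ t), ε - t • v⟫) from rfl, Tfin.deriv]
  simp only [zero_smul, sub_zero, inner_neg_right]
  rw [real_inner_comm ((fderiv ℝ (gradient f) x) ε) ε]
  ring
end

section
/- Let h : ℝ → ℝ and f : ℝ^d → ℝ be twice continuously differentiable, p a smooth positive density on ℝ^d, and fix x ∈ ℝ^d, y ∈ ℝ. For ε ∈ ℝ^d define ψ_ε(β) = h(f(x̃(β))) − y·f(x̃(β)) with x̃(β) = x − (β²/2)∇log p(x) + βε. Then for ε ~ N(0, I_d), E_ε[ψ_ε''(0)] = h''(f(x))·tr(∇f(x)∇f(x)ᵀ) + (h'(f(x)) − y)·tr(∇²f(x)) − (h'(f(x)) − y)·∇f(x)ᵀ∇log p(x). -/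
open MeasureTheory Real
open scoped RealInnerProductSpace BigOperators

/-- The standard Gaussian measure `N(0, I_d)` on `ℝ^d`. -/
noncomputable def stdGaussian (d : ℕ) : Measure (EuclideanSpace ℝ (Fin d)) :=
  Measure.map (⇑(EuclideanSpace.equiv (Fin d) ℝ).symm)
    (Measure.pi fun _ : Fin d => ProbabilityTheory.gaussianReal 0 1)

section Aux
open Filter ProbabilityTheory
open scoped ENNReal NNReal


lemma sq_tendsto_atBot : Tendsto (fun x : ℝ => x ^ 2) atBot atTop := by
  have : (fun x : ℝ => x ^ 2) = (fun y : ℝ => y ^ 2) ∘ (fun x => -x) := by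
    funext x; simp
  rw [this]
  exact (tendsto_pow_atTop (by norm_num)).comp tendsto_neg_atBot_atTop

lemma tendsto_exp_neg_sq_atTop : Tendsto (fun x : ℝ => rexp (-(1/2) * x ^ 2)) atTop (nhds 0) := by
  apply Real.tendsto_exp_atBot.comp
  exact (tendsto_pow_atTop (by norm_num)).const_mul_atTop_of_neg (by norm_num)

lemma tendsto_exp_neg_sq_atBot : Tendsto (fun x : ℝ => rexp (-(1/2) * x ^ 2)) atBot (nhds 0) := by
  apply Real.tendsto_exp_atBot.comp
  exact sq_tendsto_atBot.const_mul_atTop_of_neg (by norm_num)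

lemma tendsto_mul_exp_neg_sq_atTop :
    Tendsto (fun x : ℝ => x * rexp (-(1/2) * x ^ 2)) atTop (nhds 0) := by
  have h := rpow_mul_exp_neg_mul_sq_isLittleO_exp_neg (b := 1/2) (by norm_num) 1
  have h2 : Tendsto (fun x : ℝ => rexp (-(1/2) * x)) atTop (nhds 0) := by
    apply Real.tendsto_exp_atBot.comp
    exact tendsto_id.const_mul_atTop_of_neg (by norm_num)
  have := h.trans_tendsto h2
  refine this.congr' ?_
  filter_upwards [eventually_gt_atTop (0:ℝ)] with x hx
  rw [Real.rpow_one]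
lemma tendsto_mul_exp_neg_sq_atBot :
    Tendsto (fun x : ℝ => x * rexp (-(1/2) * x ^ 2)) atBot (nhds 0) := by
  have : (fun x : ℝ => x * rexp (-(1/2) * x ^ 2))
      = (fun y : ℝ => -(y * rexp (-(1/2) * y ^ 2))) ∘ (fun x => -x) := by
    funext x; simp
  rw [this]
  have := (tendsto_mul_exp_neg_sq_atTop.neg).comp tendsto_neg_atBot_atTop
  simpa using this

lemma ftc_real {F f : ℝ → ℝ} {m l : ℝ} (hF : ∀ x, HasDerivAt F (f x) x)
    (hint : Integrable f) (htop : Tendsto F atTop (nhds m))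
    (hbot : Tendsto F atBot (nhds l)) : ∫ x, f x = m - l := by
  have h1 : ∫ x in Set.Iic (0:ℝ), f x = F 0 - l :=
    integral_Iic_of_hasDerivAt_of_tendsto' (fun x _ => hF x) hint.integrableOn hbot
  have h2 : ∫ x in Set.Ioi (0:ℝ), f x = m - F 0 :=
    integral_Ioi_of_hasDerivAt_of_tendsto' (fun x _ => hF x) hint.integrableOn htop
  rw [← intervalIntegral.integral_Iic_add_Ioi (b := (0:ℝ)) hint.integrableOn hint.integrableOn, h1, h2]
  ring

lemma integrable_sq_exp : Integrable (fun x : ℝ => x ^ 2 * rexp (-(1/2) * x ^ 2)) := by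
  have := integrable_rpow_mul_exp_neg_mul_sq (b := 1/2) (by norm_num) (s := 2) (by norm_num)
  have e : ∀ x : ℝ, x ^ (2:ℝ) = x ^ (2:ℕ) := fun x => by
    rw [← Real.rpow_natCast x 2]; norm_num
  simpa [e] using this

lemma integrable_exp_sq : Integrable (fun x : ℝ => rexp (-(1/2) * x ^ 2)) :=
  integrable_exp_neg_mul_sq (by norm_num)

lemma int_exp_half : ∫ x : ℝ, rexp (-(1/2) * x ^ 2) = Real.sqrt (2 * π) := by
  have := integral_gaussian (1/2)
  rw [show ((π / (1/2)) = 2 * π) by ring] at this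
  simpa using this

lemma deriv_exp_sq (x : ℝ) :
    HasDerivAt (fun x : ℝ => rexp (-(1/2) * x ^ 2)) (-x * rexp (-(1/2) * x ^ 2)) x := by
  have h1 : HasDerivAt (fun x : ℝ => -(1/2) * x ^ 2) (-x) x := by
    have := (hasDerivAt_pow 2 x).const_mul (-(1/2) : ℝ)
    exact this.congr_deriv (by push_cast; ring)
  simpa [mul_comm] using h1.exp

lemma int_id_exp : ∫ x : ℝ, x * rexp (-(1/2) * x ^ 2) = 0 := by
  have hF : ∀ x : ℝ, HasDerivAt (fun x : ℝ => -rexp (-(1/2) * x ^ 2))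
      (x * rexp (-(1/2) * x ^ 2)) x := by
    intro x
    exact (deriv_exp_sq x).neg.congr_deriv (by ring)
  have := ftc_real hF (integrable_mul_exp_neg_mul_sq (by norm_num : (0:ℝ) < 1/2))
    (m := 0) (l := 0) (by simpa using tendsto_exp_neg_sq_atTop.neg)
    (by simpa using tendsto_exp_neg_sq_atBot.neg)
  simpa using this

lemma int_sq_exp : ∫ x : ℝ, x ^ 2 * rexp (-(1/2) * x ^ 2) = Real.sqrt (2 * π) := by
  have hF : ∀ x : ℝ, HasDerivAt (fun x : ℝ => -(x * rexp (-(1/2) * x ^ 2)))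
      (x ^ 2 * rexp (-(1/2) * x ^ 2) - rexp (-(1/2) * x ^ 2)) x := by
    intro x
    have := ((hasDerivAt_id x).mul (deriv_exp_sq x)).neg
    refine this.congr_deriv ?_
    simp only [id_eq, one_mul]
    ring
  have h0 := ftc_real hF (integrable_sq_exp.sub integrable_exp_sq)
    (m := 0) (l := 0) (by simpa using tendsto_mul_exp_neg_sq_atTop.neg)
    (by simpa using tendsto_mul_exp_neg_sq_atBot.neg)
  rw [integral_sub integrable_sq_exp integrable_exp_sq, int_exp_half] at h0
  linarith


lemma gaussianPDFReal_zero_one (x : ℝ) :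
    gaussianPDFReal 0 1 x = (Real.sqrt (2 * π))⁻¹ * rexp (-(1/2) * x ^ 2) := by
  rw [gaussianPDFReal_def]
  push_cast
  congr 1
  · norm_num
  · congr 1
    ring

lemma stdGauss_eq_withDensity :
    gaussianReal 0 1 = volume.withDensity
      (fun x => ((gaussianPDFReal 0 1 x).toNNReal : ℝ≥0∞)) := by
  rw [gaussianReal_of_var_ne_zero 0 one_ne_zero]
  rfl

lemma integral_gaussianReal (g : ℝ → ℝ) :
    ∫ x, g x ∂(gaussianReal 0 1)
      = ∫ x, (Real.sqrt (2 * π))⁻¹ * rexp (-(1/2) * x ^ 2) * g x := by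
  rw [stdGauss_eq_withDensity,
    integral_withDensity_eq_integral_smul (measurable_gaussianPDFReal 0 1).real_toNNReal g]
  congr 1
  funext x
  rw [NNReal.smul_def, Real.coe_toNNReal _ (gaussianPDFReal_nonneg 0 1 x),
    gaussianPDFReal_zero_one, smul_eq_mul]

lemma integrable_gaussianReal (g : ℝ → ℝ)
    (hg : Integrable (fun x => rexp (-(1/2) * x ^ 2) * g x)) :
    Integrable g (gaussianReal 0 1) := by
  rw [stdGauss_eq_withDensity,
    integrable_withDensity_iff_integrable_smul (measurable_gaussianPDFReal 0 1).real_toNNReal]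
  have : (fun x => ((gaussianPDFReal 0 1 x).toNNReal : ℝ≥0) • g x)
      = fun x => (Real.sqrt (2 * π))⁻¹ * (rexp (-(1/2) * x ^ 2) * g x) := by
    funext x
    rw [NNReal.smul_def, Real.coe_toNNReal _ (gaussianPDFReal_nonneg 0 1 x),
      gaussianPDFReal_zero_one, smul_eq_mul, mul_assoc]
  rw [this]
  exact hg.const_mul _

lemma sqrt_two_pi_ne : Real.sqrt (2 * π) ≠ 0 := by
  positivity

lemma gauss_integrable_id : Integrable (fun x : ℝ => x) (gaussianReal 0 1) := by
  apply integrable_gaussianReal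
  simpa [mul_comm] using integrable_mul_exp_neg_mul_sq (b := 1/2) (by norm_num)

lemma gauss_integrable_sq : Integrable (fun x : ℝ => x * x) (gaussianReal 0 1) := by
  apply integrable_gaussianReal
  have e : (fun x : ℝ => rexp (-(1/2) * x ^ 2) * (x * x))
      = fun x => x ^ 2 * rexp (-(1/2) * x ^ 2) := by
    funext x; ring
  rw [e]
  exact integrable_sq_exp

lemma gauss_int_id : ∫ x, x ∂(gaussianReal 0 1) = 0 := by
  rw [integral_gaussianReal]
  simp only [mul_assoc]
  rw [MeasureTheory.integral_const_mul]
  have : (fun x : ℝ => rexp (-(1/2) * x ^ 2) * x) = fun x => x * rexp (-(1/2) * x ^ 2) := by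
    funext x; ring
  rw [this, int_id_exp, mul_zero]

lemma gauss_int_sq : ∫ x, x * x ∂(gaussianReal 0 1) = 1 := by
  rw [integral_gaussianReal]
  simp only [mul_assoc]
  rw [MeasureTheory.integral_const_mul]
  have : (fun x : ℝ => rexp (-(1/2) * x ^ 2) * (x * x))
      = fun x => x ^ 2 * rexp (-(1/2) * x ^ 2) := by
    funext x; ring
  rw [this, int_sq_exp, inv_mul_cancel₀ sqrt_two_pi_ne]

section Pi
variable {d : ℕ}

noncomputable def coordF (i j k : Fin d) : ℝ → ℝ :=
  fun z => (if k = i then z else 1) * (if k = j then z else 1)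

lemma coordF_prod (i j : Fin d) (u : Fin d → ℝ) :
    u i * u j = ∏ k, coordF i j k (u k) := by
  unfold coordF
  rw [Finset.prod_mul_distrib]
  rw [Finset.prod_ite_eq' Finset.univ i (fun k => u k), Finset.prod_ite_eq' Finset.univ j]
  simp

lemma coordF_integrable (i j k : Fin d) : Integrable (coordF i j k) (gaussianReal 0 1) := by
  unfold coordF
  rcases eq_or_ne k i with rfl | hi <;> rcases eq_or_ne k j with rfl | hj <;>
    simp [*, gauss_integrable_sq, gauss_integrable_id, integrable_const]

lemma pi_gauss_integrable_mul (i j : Fin d) :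
    Integrable (fun u : Fin d → ℝ => u i * u j)
      (Measure.pi fun _ : Fin d => gaussianReal 0 1) := by
  letI : MeasureSpace ℝ := ⟨gaussianReal 0 1⟩
  have hσ : SigmaFinite (volume : Measure ℝ) := by
    have : IsProbabilityMeasure (volume : Measure ℝ) :=
      inferInstanceAs (IsProbabilityMeasure (gaussianReal 0 1))
    infer_instance
  have h : Integrable (fun u : Fin d → ℝ => ∏ k, coordF i j k (u k)) volume :=
    Integrable.fintype_prod (f := coordF i j) (fun k => coordF_integrable i j k)
  rw [show (Measure.pi fun _ : Fin d => gaussianReal 0 1) = (volume : Measure (Fin d → ℝ)) from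
    (volume_pi).symm]
  simpa [← coordF_prod] using h

lemma pi_gauss_integral_mul (i j : Fin d) :
    ∫ u : Fin d → ℝ, u i * u j ∂(Measure.pi fun _ : Fin d => gaussianReal 0 1)
      = if i = j then 1 else 0 := by
  letI : MeasureSpace ℝ := ⟨gaussianReal 0 1⟩
  have hσ : SigmaFinite (volume : Measure ℝ) := by
    have : IsProbabilityMeasure (volume : Measure ℝ) :=
      inferInstanceAs (IsProbabilityMeasure (gaussianReal 0 1))
    infer_instance
  rw [show (Measure.pi fun _ : Fin d => gaussianReal 0 1) = (volume : Measure (Fin d → ℝ)) from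
    (volume_pi).symm]
  have : ∀ u : Fin d → ℝ, u i * u j = ∏ k, coordF i j k (u k) := coordF_prod i j
  calc ∫ u : Fin d → ℝ, u i * u j = ∫ u : Fin d → ℝ, ∏ k, coordF i j k (u k) := by
        simp_rw [this]
    _ = ∏ k, ∫ z : ℝ, coordF i j k z := integral_fintype_prod_eq_prod (coordF i j)
    _ = if i = j then 1 else 0 := by
        rcases eq_or_ne i j with rfl | hij
        · rw [if_pos rfl]
          rw [Finset.prod_eq_single i]
          · unfold coordF
            simp
            exact gauss_int_sq
          · intro k _ hk
            have : IsProbabilityMeasure (volume : Measure ℝ) :=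
              inferInstanceAs (IsProbabilityMeasure (gaussianReal 0 1))
            unfold coordF
            simp [hk]
          · simp
        · rw [if_neg hij]
          apply Finset.prod_eq_zero (Finset.mem_univ i)
          unfold coordF
          simp [hij]
          exact gauss_int_id
end Pi

variable {d : ℕ}


noncomputable abbrev eBasis (d : ℕ) : OrthonormalBasis (Fin d) ℝ (EuclideanSpace ℝ (Fin d)) :=
  EuclideanSpace.basisFun (Fin d) ℝ

instance stdGaussian_prob (d : ℕ) : IsProbabilityMeasure (stdGaussian d) := by
  unfold _root_.stdGaussian
  exact Measure.isProbabilityMeasure_map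
    ((EuclideanSpace.equiv (Fin d) ℝ).symm.continuous.measurable.aemeasurable)

lemma bilin_expand (B : EuclideanSpace ℝ (Fin d) →L[ℝ] (EuclideanSpace ℝ (Fin d) →L[ℝ] ℝ)) (z : EuclideanSpace ℝ (Fin d)) :
    B z z = ∑ i, ∑ j, z i * z j * B (eBasis d i) (eBasis d j) := by
  conv_lhs => rw [← (eBasis d).sum_repr z]
  simp only [map_sum, _root_.map_smul, ContinuousLinearMap.coe_sum', Finset.sum_apply,
    ContinuousLinearMap.coe_smul', Pi.smul_apply, smul_eq_mul, EuclideanSpace.basisFun_repr]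
  rw [Finset.sum_comm]
  congr 1; funext i
  rw [Finset.mul_sum]
  congr 1; funext j
  ring

lemma continuous_bilin (B : EuclideanSpace ℝ (Fin d) →L[ℝ] (EuclideanSpace ℝ (Fin d) →L[ℝ] ℝ)) : Continuous fun z : EuclideanSpace ℝ (Fin d) => B z z := by
  have : Continuous fun p : EuclideanSpace ℝ (Fin d) × EuclideanSpace ℝ (Fin d) => B p.1 p.2 := B.continuous₂
  exact this.comp (continuous_id.prodMk continuous_id)

lemma integral_bilin_stdGaussian (B : EuclideanSpace ℝ (Fin d) →L[ℝ] (EuclideanSpace ℝ (Fin d) →L[ℝ] ℝ)) :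
    ∫ ε, B ε ε ∂(stdGaussian d) = ∑ i, B (eBasis d i) (eBasis d i) := by
  unfold _root_.stdGaussian
  rw [integral_map ((EuclideanSpace.equiv (Fin d) ℝ).symm.continuous.measurable.aemeasurable)
    (continuous_bilin B).aestronglyMeasurable]
  have key : ∀ u : Fin d → ℝ,
      B ((EuclideanSpace.equiv (Fin d) ℝ).symm u) ((EuclideanSpace.equiv (Fin d) ℝ).symm u)
        = ∑ i, ∑ j, u i * u j * B (eBasis d i) (eBasis d j) := fun u => bilin_expand B _
  simp_rw [key]
  rw [integral_finset_sum _ (fun i _ => integrable_finset_sum _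
    (fun j _ => (pi_gauss_integrable_mul i j).mul_const _))]
  have : ∀ i, ∫ u : Fin d → ℝ, (∑ j, u i * u j * B (eBasis d i) (eBasis d j))
        ∂(Measure.pi fun _ : Fin d => gaussianReal 0 1)
      = ∑ j, (if i = j then (1:ℝ) else 0) * B (eBasis d i) (eBasis d j) := by
    intro i
    rw [integral_finset_sum _ (fun j _ => (pi_gauss_integrable_mul i j).mul_const _)]
    congr 1; funext j
    rw [integral_mul_const, pi_gauss_integral_mul]
  simp_rw [this]
  simp [Finset.sum_ite_eq]

lemma integrable_bilin_stdGaussian (B : EuclideanSpace ℝ (Fin d) →L[ℝ] (EuclideanSpace ℝ (Fin d) →L[ℝ] ℝ)) :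
    Integrable (fun ε => B ε ε) (stdGaussian d) := by
  unfold _root_.stdGaussian
  rw [integrable_map_measure (continuous_bilin B).aestronglyMeasurable
    ((EuclideanSpace.equiv (Fin d) ℝ).symm.continuous.measurable.aemeasurable)]
  have key : ((fun ε : EuclideanSpace ℝ (Fin d) => B ε ε) ∘ (EuclideanSpace.equiv (Fin d) ℝ).symm)
      = fun u : Fin d → ℝ => ∑ i, ∑ j, u i * u j * B (eBasis d i) (eBasis d j) := by
    funext u; exact bilin_expand B _
  rw [key]
  exact integrable_finset_sum _ (fun i _ => integrable_finset_sum _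
    (fun j _ => (pi_gauss_integrable_mul i j).mul_const _))
section CalcAux




-- P1: pointwise second derivative
lemma second_deriv_curve (F : EuclideanSpace ℝ (Fin d) → ℝ) (hF : ContDiff ℝ 2 F) (x v ε : EuclideanSpace ℝ (Fin d)) :
    deriv (deriv (fun b : ℝ => F (x - (b ^ 2 / 2) • v + b • ε))) 0
      = fderiv ℝ (fderiv ℝ F) x ε ε - fderiv ℝ F x v := by
  set g : ℝ → EuclideanSpace ℝ (Fin d) := fun b => x - (b ^ 2 / 2) • v + b • ε with hg_def
  have hsq : ∀ b : ℝ, HasDerivAt (fun b : ℝ => b ^ 2 / 2) b b := by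
    intro b
    have := (hasDerivAt_pow 2 b).div_const 2
    simpa using this
  have hcoef : ∀ b : ℝ, HasDerivAt (fun b : ℝ => (b ^ 2 / 2) • v) (b • v) b := by
    intro b
    simpa using (hsq b).smul_const v
  have hlin : ∀ b : ℝ, HasDerivAt (fun b : ℝ => b • ε) ε b := by
    intro b
    simpa using (hasDerivAt_id b).smul_const ε
  have hg : ∀ b : ℝ, HasDerivAt g (ε - b • v) b := by
    intro b
    have h := ((hasDerivAt_const b x).sub (hcoef b)).add (hlin b)
    refine h.congr_deriv ?_
    abel
  have hdiff : Differentiable ℝ F := hF.differentiable (by norm_num)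
  have hderiv1 : deriv (fun b : ℝ => F (g b)) = fun b => fderiv ℝ F (g b) (ε - b • v) := by
    funext b
    exact ((hdiff (g b)).hasFDerivAt.comp_hasDerivAt b (hg b)).deriv
  rw [hderiv1]
  have hg0 : g 0 = x := by simp [hg_def]
  have hDF : ContDiff ℝ 1 (fderiv ℝ F) := hF.fderiv_right (le_refl _)
  have hA : HasFDerivAt (fderiv ℝ F) (fderiv ℝ (fderiv ℝ F) x) (g 0) := by
    rw [hg0]
    exact (hDF.differentiable (by norm_num) x).hasFDerivAt
  have hg0' : HasDerivAt g ε 0 := by simpa using hg 0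
  have hL : HasDerivAt (fun b => fderiv ℝ F (g b)) (fderiv ℝ (fderiv ℝ F) x ε) 0 := by
    exact hA.comp_hasDerivAt 0 hg0'
  have hc : HasDerivAt (fun b : ℝ => ε - b • v) (-v) 0 := by
    have h := (hasDerivAt_const (0:ℝ) ε).sub ((hasDerivAt_id (0:ℝ)).smul_const v)
    exact h.congr_deriv (by simp)
  rw [(hL.clm_apply hc).deriv, hg0]
  simp [sub_eq_add_neg]

-- P2: first fderiv of F
lemma fderiv_F_eq (h : ℝ → ℝ) (f : EuclideanSpace ℝ (Fin d) → ℝ) (hh : ContDiff ℝ 2 h) (hf : ContDiff ℝ 2 f) (y : ℝ) :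
    ∀ z : EuclideanSpace ℝ (Fin d), fderiv ℝ (fun w => h (f w) - y * f w) z
      = (deriv h (f z) - y) • fderiv ℝ f z := by
  intro z
  have hfz : HasFDerivAt f (fderiv ℝ f z) z := (hf.differentiable (by norm_num) z).hasFDerivAt
  have hhz : HasDerivAt h (deriv h (f z)) (f z) :=
    (hh.differentiable (by norm_num) (f z)).hasDerivAt
  have h1 : HasFDerivAt (fun w => h (f w)) (deriv h (f z) • fderiv ℝ f z) z :=
    hhz.comp_hasFDerivAt z hfz
  have h2 : HasFDerivAt (fun w => y * f w) (y • fderiv ℝ f z) z := hfz.const_mul y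
  have h3 := h1.sub h2
  rw [show (fun w => h (f w) - y * f w) = ((fun w => h (f w)) - fun w => y * f w) from rfl, h3.fderiv]
  rw [sub_smul]

-- P3: second fderiv of F evaluated
lemma fderiv2_F_eq (h : ℝ → ℝ) (f : EuclideanSpace ℝ (Fin d) → ℝ) (hh : ContDiff ℝ 2 h) (hf : ContDiff ℝ 2 f)
    (y : ℝ) (x : EuclideanSpace ℝ (Fin d)) (ε η : EuclideanSpace ℝ (Fin d)) :
    fderiv ℝ (fderiv ℝ (fun w => h (f w) - y * f w)) x ε η
      = deriv (deriv h) (f x) * (fderiv ℝ f x ε * fderiv ℝ f x η)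
        + (deriv h (f x) - y) * fderiv ℝ (fderiv ℝ f) x ε η := by
  have heq : fderiv ℝ (fun w => h (f w) - y * f w)
      = fun z => (deriv h (f z) - y) • fderiv ℝ f z :=
    funext (fderiv_F_eq h f hh hf y)
  rw [heq]
  have hfx : HasFDerivAt f (fderiv ℝ f x) x := (hf.differentiable (by norm_num) x).hasFDerivAt
  have hh1 : ContDiff ℝ 1 (deriv h) := by
    have h' : ContDiff ℝ ((1 : WithTop ℕ∞) + 1) h := by
      have e : ((1 : WithTop ℕ∞) + 1) = 2 := by norm_num
      rw [e]; exact hh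
    exact (contDiff_succ_iff_deriv.mp h').2.2
  have hdh : HasDerivAt (deriv h) (deriv (deriv h) (f x)) (f x) :=
    (hh1.differentiable (by norm_num) (f x)).hasDerivAt
  have hc : HasFDerivAt (fun z => deriv h (f z) - y)
      (deriv (deriv h) (f x) • fderiv ℝ f x) x :=
    (hdh.comp_hasFDerivAt x hfx).sub_const y
  have hD : HasFDerivAt (fderiv ℝ f) (fderiv ℝ (fderiv ℝ f) x) x :=
    ((hf.fderiv_right (m := 1) (le_refl _)).differentiable (by norm_num) x).hasFDerivAt
  have hsmul := hc.smul hD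
  rw [show (fun z => (deriv h (f z) - y) • fderiv ℝ f z) = ((fun z => deriv h (f z) - y) • fderiv ℝ f) from rfl, hsmul.fderiv]
  simp [ContinuousLinearMap.smul_apply, ContinuousLinearMap.add_apply,
    ContinuousLinearMap.smulRight_apply, smul_eq_mul]
  ring

-- P4
lemma fderiv_eq_inner_gradient (f : EuclideanSpace ℝ (Fin d) → ℝ) (x : EuclideanSpace ℝ (Fin d)) (w : EuclideanSpace ℝ (Fin d)) :
    fderiv ℝ f x w = ⟪gradient f x, w⟫ := by
  rw [show gradient f x = (InnerProductSpace.toDual ℝ _).symm (fderiv ℝ f x) from rfl]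
  rw [InnerProductSpace.toDual_symm_apply]

-- P5
lemma trace_fderiv_gradient (f : EuclideanSpace ℝ (Fin d) → ℝ) (hf : ContDiff ℝ 2 f) (x : EuclideanSpace ℝ (Fin d)) :
    (LinearMap.trace ℝ (EuclideanSpace ℝ (Fin d))
        (fderiv ℝ (gradient f) x).toLinearMap)
      = ∑ i, fderiv ℝ (fderiv ℝ f) x (EuclideanSpace.basisFun (Fin d) ℝ i)
          (EuclideanSpace.basisFun (Fin d) ℝ i) := by
  have hD : HasFDerivAt (fderiv ℝ f) (fderiv ℝ (fderiv ℝ f) x) x :=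
    ((hf.fderiv_right (m := 1) (le_refl _)).differentiable (by norm_num) x).hasFDerivAt
  set L : (EuclideanSpace ℝ (Fin d) →L[ℝ] ℝ) ≃L[ℝ] EuclideanSpace ℝ (Fin d) :=
    (InnerProductSpace.toDual ℝ (EuclideanSpace ℝ (Fin d))).symm.toContinuousLinearEquiv
      with hL_def
  have hgrad_eq : gradient f = fun z => L (fderiv ℝ f z) := rfl
  have hM : HasFDerivAt (gradient f)
      ((L : (EuclideanSpace ℝ (Fin d) →L[ℝ] ℝ) →L[ℝ] EuclideanSpace ℝ (Fin d)).comp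
        (fderiv ℝ (fderiv ℝ f) x)) x := by
    rw [hgrad_eq]
    exact (L.toContinuousLinearMap.hasFDerivAt).comp x hD
  rw [hM.fderiv]
  rw [LinearMap.trace_eq_matrix_trace ℝ (EuclideanSpace.basisFun (Fin d) ℝ).toBasis]
  rw [Matrix.trace]
  congr 1
  funext i
  rw [Matrix.diag_apply, LinearMap.toMatrix_apply]
  rw [OrthonormalBasis.coe_toBasis_repr_apply, OrthonormalBasis.repr_apply_apply,
    OrthonormalBasis.coe_toBasis]
  rw [real_inner_comm]
  exact InnerProductSpace.toDual_symm_apply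

end CalcAux
end Aux

/-- with `ψ_ε(β) = h(f(x̃(β))) − y·f(x̃(β))` and `ε ~ N(0, I_d)`,
`E_ε[ψ_ε''(0)] = h''(f(x))·tr(∇f(x)∇f(x)ᵀ) + (h'(f(x)) − y)·tr(∇²f(x))
                 − (h'(f(x)) − y)·∇f(x)ᵀ∇log p(x)`.
Here `tr(∇f(x)∇f(x)ᵀ) = ‖∇f(x)‖²` and `tr(∇²f(x))` is the trace of the Hessian,
i.e. of the derivative of the gradient. -/
theorem psi_second_deriv_expectation
    {d : ℕ} (h : ℝ → ℝ) (f p : EuclideanSpace ℝ (Fin d) → ℝ)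
    (hh : ContDiff ℝ 2 h) (hf : ContDiff ℝ 2 f)
    (hp : ContDiff ℝ (⊤ : ℕ∞) p) (hppos : ∀ z, 0 < p z)
    (x : EuclideanSpace ℝ (Fin d)) (y : ℝ) :
    ∫ ε, deriv (deriv (fun b : ℝ =>
        h (f (langevinPerturb p b x ε)) - y * f (langevinPerturb p b x ε))) 0
      ∂(stdGaussian d)
      = deriv (deriv h) (f x) * ‖gradient f x‖ ^ 2
        + (deriv h (f x) - y) *
            LinearMap.trace ℝ (EuclideanSpace ℝ (Fin d))
              (fderiv ℝ (gradient f) x).toLinearMap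
        - (deriv h (f x) - y) *
            ⟪gradient f x, gradient (fun z => Real.log (p z)) x⟫ := by
  classical
  set v := gradient (fun z => Real.log (p z)) x with hv
  set F : EuclideanSpace ℝ (Fin d) → ℝ := fun w => h (f w) - y * f w with hF_def
  have hF : ContDiff ℝ 2 F := (hh.comp hf).sub (contDiff_const.mul hf)
  have hpt : ∀ ε : EuclideanSpace ℝ (Fin d), deriv (deriv (fun b : ℝ =>
      h (f (langevinPerturb p b x ε)) - y * f (langevinPerturb p b x ε))) 0
      = fderiv ℝ (fderiv ℝ F) x ε ε - fderiv ℝ F x v := by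
    intro ε
    have e1 : (fun b : ℝ => h (f (langevinPerturb p b x ε)) - y * f (langevinPerturb p b x ε))
        = fun b : ℝ => F (x - (b ^ 2 / 2) • v + b • ε) := rfl
    rw [e1]
    exact second_deriv_curve F hF x v ε
  simp_rw [hpt]
  set A := fderiv ℝ (fderiv ℝ F) x with hA_def
  have hint1 : Integrable (fun ε => A ε ε) (stdGaussian d) := integrable_bilin_stdGaussian A
  rw [integral_sub hint1 (integrable_const _), integral_const]
  simp only [measure_univ, probReal_univ, ENNReal.toReal_one, one_smul, smul_eq_mul, one_mul]
  rw [integral_bilin_stdGaussian A]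
  have hterm : ∀ i : Fin d, A (eBasis d i) (eBasis d i)
      = deriv (deriv h) (f x) *
          (fderiv ℝ f x (eBasis d i) * fderiv ℝ f x (eBasis d i))
        + (deriv h (f x) - y) * fderiv ℝ (fderiv ℝ f) x (eBasis d i) (eBasis d i) := by
    intro i
    rw [hA_def, hF_def]
    exact fderiv2_F_eq h f hh hf y x _ _
  have hsum1 : ∑ i, fderiv ℝ f x (eBasis d i) * fderiv ℝ f x (eBasis d i)
      = ‖gradient f x‖ ^ 2 := by
    have e2 : ∀ i : Fin d, fderiv ℝ f x (eBasis d i) = ⟪gradient f x, eBasis d i⟫ :=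
      fun i => fderiv_eq_inner_gradient f x _
    calc ∑ i, fderiv ℝ f x (eBasis d i) * fderiv ℝ f x (eBasis d i)
        = ∑ i, ⟪gradient f x, eBasis d i⟫ * ⟪eBasis d i, gradient f x⟫ := by
          refine Finset.sum_congr rfl fun i _ => ?_
          rw [e2 i, real_inner_comm (eBasis d i)]
      _ = ⟪gradient f x, gradient f x⟫ :=
          (eBasis d).sum_inner_mul_inner (gradient f x) (gradient f x)
      _ = ‖gradient f x‖ ^ 2 := real_inner_self_eq_norm_sq _
  have hsum2 : ∑ i, fderiv ℝ (fderiv ℝ f) x (eBasis d i) (eBasis d i)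
      = LinearMap.trace ℝ (EuclideanSpace ℝ (Fin d)) (fderiv ℝ (gradient f) x).toLinearMap :=
    (trace_fderiv_gradient f hf x).symm
  have hlast : fderiv ℝ F x v = (deriv h (f x) - y) * ⟪gradient f x, v⟫ := by
    rw [hF_def, fderiv_F_eq h f hh hf y x]
    rw [ContinuousLinearMap.smul_apply, smul_eq_mul, fderiv_eq_inner_gradient]
  rw [hlast]
  calc ∑ i, A (eBasis d i) (eBasis d i) - (deriv h (f x) - y) * ⟪gradient f x, v⟫
      = deriv (deriv h) (f x) *
          (∑ i, fderiv ℝ f x (eBasis d i) * fderiv ℝ f x (eBasis d i))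
        + (deriv h (f x) - y) *
          (∑ i, fderiv ℝ (fderiv ℝ f) x (eBasis d i) (eBasis d i))
        - (deriv h (f x) - y) * ⟪gradient f x, v⟫ := by
        rw [Finset.mul_sum, Finset.mul_sum, ← Finset.sum_add_distrib]
        congr 1
        exact Finset.sum_congr rfl fun i _ => hterm i
    _ = _ := by rw [hsum1, hsum2]
end

section
/- Let x be a random vector in ℝ^d with second-moment matrix Σ_x = E[xxᵀ] whose smallest eigenvalue σ is positive, let A : ℝ → ℝ be twice differentiable, s : ℝ^d → ℝ^d measurable, and γ, ρ, κ₁, κ₂ > 0. Suppose θ ∈ ℝ^d satisfies: (i) γ ≥ ‖θ‖²·( E[A''(θᵀx)] − (κ₁/κ₂)·√(E[A'(θᵀx)²]) ) and (ii) the ρ-retentiveness inequality E[A''(θᵀx)] − (κ₁/κ₂)·√(E[A'(θᵀx)²]) ≥ ρ·min{1, θᵀΣ_xθ}. Then ‖θ‖² ≤ max{ γ/ρ, √(γ/(ρσ)) }. -/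
open MeasureTheory Real
open scoped RealInnerProductSpace BigOperators

/-- resolving the retentiveness constraint into a norm bound.
Let `Σ_x = E[xxᵀ]` have smallest eigenvalue `σ > 0`.  If
(i) `γ ≥ ‖θ‖²·( E[A''(θᵀx)] − (κ₁/κ₂)·√(E[A'(θᵀx)²]) )`, and
(ii) `E[A''(θᵀx)] − (κ₁/κ₂)·√(E[A'(θᵀx)²]) ≥ ρ·min{1, θᵀΣ_xθ}`,
then `‖θ‖² ≤ max{ γ/ρ, √(γ/(ρσ)) }`.
The property "`σ` is the smallest eigenvalue of `Σ_x`" is expressed by saying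
that `σ` is an eigenvalue of `Σ_x` and `σ‖v‖² ≤ vᵀΣ_xv` for all `v`. -/
theorem retentive_norm_bound
    {d : ℕ} (μ : Measure (EuclideanSpace ℝ (Fin d))) [IsProbabilityMeasure μ]
    (hx2 : Integrable (fun v => ‖v‖ ^ 2) μ)
    (Sx : Matrix (Fin d) (Fin d) ℝ)
    (hSx : ∀ i j, Sx i j = ∫ v, v i * v j ∂μ)
    (σ γ ρ κ₁ κ₂ : ℝ) (hσ : 0 < σ) (hγ : 0 < γ) (hρ : 0 < ρ)
    (hκ₁ : 0 < κ₁) (hκ₂ : 0 < κ₂)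
    (hσ_eig : ∃ v : EuclideanSpace ℝ (Fin d), v ≠ 0 ∧
      Matrix.toEuclideanLin Sx v = σ • v)
    (hσ_min : ∀ v : EuclideanSpace ℝ (Fin d),
      σ * ‖v‖ ^ 2 ≤ ⟪v, Matrix.toEuclideanLin Sx v⟫)
    (A : ℝ → ℝ) (hA : Differentiable ℝ A) (hA' : Differentiable ℝ (deriv A))
    (s : EuclideanSpace ℝ (Fin d) → EuclideanSpace ℝ (Fin d)) (hs : Measurable s)
    (θ : EuclideanSpace ℝ (Fin d))
    (hi : ‖θ‖ ^ 2 * ((∫ x, deriv (deriv A) ⟪θ, x⟫ ∂μ) -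
        (κ₁ / κ₂) * Real.sqrt (∫ x, (deriv A ⟪θ, x⟫) ^ 2 ∂μ)) ≤ γ)
    (hii : ρ * min 1 ⟪θ, Matrix.toEuclideanLin Sx θ⟫ ≤
        (∫ x, deriv (deriv A) ⟪θ, x⟫ ∂μ) -
          (κ₁ / κ₂) * Real.sqrt (∫ x, (deriv A ⟪θ, x⟫) ^ 2 ∂μ)) :
    ‖θ‖ ^ 2 ≤ max (γ / ρ) (Real.sqrt (γ / (ρ * σ))) := by
  set E : ℝ := (∫ x, deriv (deriv A) ⟪θ, x⟫ ∂μ) -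
      (κ₁ / κ₂) * Real.sqrt (∫ x, (deriv A ⟪θ, x⟫) ^ 2 ∂μ) with hE
  set q : ℝ := ⟪θ, Matrix.toEuclideanLin Sx θ⟫ with hq
  have hσθ : σ * ‖θ‖ ^ 2 ≤ q := hσ_min θ
  have ht0 : (0:ℝ) ≤ ‖θ‖ ^ 2 := by positivity
  rcases le_or_gt 1 q with h1 | h1
  · -- min = 1, E ≥ ρ
    have hmin : min 1 q = 1 := min_eq_left h1
    have hEρ : ρ ≤ E := by
      have h := hii; rw [hmin] at h; linarith
    have : ‖θ‖ ^ 2 * ρ ≤ ‖θ‖ ^ 2 * E := by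
      exact mul_le_mul_of_nonneg_left hEρ ht0
    have hle : ‖θ‖ ^ 2 ≤ γ / ρ := by
      rw [le_div_iff₀ hρ]; linarith
    exact le_max_of_le_left hle
  · -- min = q ≥ σ‖θ‖²
    have hmin : min 1 q = q := min_eq_right h1.le
    have hEρ : ρ * (σ * ‖θ‖ ^ 2) ≤ E := by
      have h := hii; rw [hmin] at h
      calc ρ * (σ * ‖θ‖ ^ 2) ≤ ρ * q := by nlinarith
        _ ≤ E := h
    have h4 : ρ * σ * (‖θ‖ ^ 2) ^ 2 ≤ γ := by
      have : ‖θ‖ ^ 2 * (ρ * (σ * ‖θ‖ ^ 2)) ≤ ‖θ‖ ^ 2 * E :=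
        mul_le_mul_of_nonneg_left hEρ ht0
      nlinarith
    have hle : ‖θ‖ ^ 2 ≤ Real.sqrt (γ / (ρ * σ)) := by
      rw [show (‖θ‖ ^ 2 : ℝ) = Real.sqrt ((‖θ‖ ^ 2) ^ 2) from (Real.sqrt_sq ht0).symm]
      apply Real.sqrt_le_sqrt
      rw [le_div_iff₀ (by positivity)]
      nlinarith
    exact le_max_of_le_right hle
end
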